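/- arXiv:2102.10623 — 5 statements merged into one kernel-verified Lean document; each statement's English description precedes it below -/
import Mathlib

section
/- Let p be a prime and let q2, q3, α, β, j1, j2, j3, k1, k2, k3, λ be integers with 1 ≤ q3 < q2 ≤ p−1, 0 ≤ α ≤ p−1, 1 ≤ β ≤ p, α < β, all of j1, j2, j3, k1, k2, k3 in {0,...,p−1}, k1 = k2, α ≤ j3 ≤ β−1, and (q2 − q3)·j3 = q2·j2 − q3·j1 − λ·p. Set c1 = j1·p + k1 and c2 = j2·p + k2. Then, as rational numbers, α·p ≤ (q2·c2 − q3·c1 − λ·p²)/(q2 − q3) < β·p. -/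
/-- Inequality (19): under the 6-cycle constraints with `1 ≤ q3 < q2 ≤ p-1`,
`α ≤ j3 ≤ β - 1`, `k1 = k2`, and `(q2 - q3)*j3 = q2*j2 - q3*j1 - λ*p`, setting
`c1 = j1*p + k1` and `c2 = j2*p + k2`, we have
`α*p ≤ (q2*c2 - q3*c1 - λ*p²)/(q2 - q3) < β*p` over `ℚ`. -/
theorem alc_ineq_nineteen (p q2 q3 α β j1 j2 j3 k1 k2 k3 lam c1 c2 : ℤ)
    (hp : Prime p)
    (hq3 : 1 ≤ q3) (hq32 : q3 < q2) (hq2 : q2 ≤ p - 1)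
    (hα0 : 0 ≤ α) (hα : α ≤ p - 1)
    (hβ1 : 1 ≤ β) (hβ : β ≤ p) (hαβ : α < β)
    (hj1 : 0 ≤ j1) (hj1' : j1 ≤ p - 1)
    (hj2 : 0 ≤ j2) (hj2' : j2 ≤ p - 1)
    (hj3 : 0 ≤ j3) (hj3' : j3 ≤ p - 1)
    (hk1 : 0 ≤ k1) (hk1' : k1 ≤ p - 1)
    (hk2 : 0 ≤ k2) (hk2' : k2 ≤ p - 1)
    (hk3 : 0 ≤ k3) (hk3' : k3 ≤ p - 1)
    (hk : k1 = k2)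
    (hj3α : α ≤ j3) (hj3β : j3 ≤ β - 1)
    (heq : (q2 - q3) * j3 = q2 * j2 - q3 * j1 - lam * p)
    (hc1 : c1 = j1 * p + k1) (hc2 : c2 = j2 * p + k2) :
    (α : ℚ) * p ≤ ((q2 : ℚ) * c2 - (q3 : ℚ) * c1 - (lam : ℚ) * p ^ 2) / ((q2 : ℚ) - q3) ∧
    ((q2 : ℚ) * c2 - (q3 : ℚ) * c1 - (lam : ℚ) * p ^ 2) / ((q2 : ℚ) - q3) < (β : ℚ) * p := by
  have hpos : (0 : ℚ) < (q2 : ℚ) - q3 := by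
    have : q3 < q2 := hq32
    push_cast
    linarith [(by exact_mod_cast this : (q3 : ℚ) < q2)]
  have hkey : (q2 : ℚ) * c2 - (q3 : ℚ) * c1 - (lam : ℚ) * p ^ 2
      = ((q2 : ℚ) - q3) * (j3 * p + k1) := by
    have h : q2 * c2 - q3 * c1 - lam * p ^ 2 = (q2 - q3) * (j3 * p + k1) := by
      subst hc1 hc2 hk
      nlinarith [heq]
    exact_mod_cast h
  have hdiv : ((q2 : ℚ) * c2 - (q3 : ℚ) * c1 - (lam : ℚ) * p ^ 2) / ((q2 : ℚ) - q3)
      = (j3 : ℚ) * p + k1 := by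
    rw [hkey, mul_div_cancel_left₀ _ (ne_of_gt hpos)]
  have hp1 : (1 : ℤ) < p := by
    linarith [hq3, hq32, hq2]
  have hpQ : (0 : ℚ) < p := by exact_mod_cast lt_trans one_pos hp1
  constructor
  · rw [hdiv]
    have h1 : (α : ℚ) ≤ j3 := by exact_mod_cast hj3α
    have h2 : (0 : ℚ) ≤ k1 := by exact_mod_cast hk1
    nlinarith
  · rw [hdiv]
    have h1 : (j3 : ℚ) ≤ (β : ℚ) - 1 := by exact_mod_cast hj3β
    have h2 : (k1 : ℚ) ≤ (p : ℚ) - 1 := by exact_mod_cast hk1'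
    nlinarith
end

section
/- (Lemma 1, adapted line counting range.) Let p be a prime, let q2, q3 be integers with 1 ≤ q3 < q2 ≤ p−1, let α, β be integers with 0 ≤ α ≤ p−1, 1 ≤ β ≤ p, α < β, and let j1, j2, j3, k1, k2, k3 be integers in {0,...,p−1} with k1 = k2 and α ≤ j3 ≤ β−1. Suppose p divides (k3 − k2) − q2·(j2 − j3) and p divides (k3 − k2) − q3·(j1 − j3). Set c1 = j1·p + k1 and c2 = j2·p + k2. Then there exists an integer λ with 2−2p ≤ λ ≤ 2p−2 such that, as rational numbers, (1 − q3/q2)·α·p + λ·p²/q2 ≤ c2 − (q3/q2)·c1 < (1 − q3/q2)·β·p + λ·p²/q2. -/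
set_option maxHeartbeats 1000000 in
/-- Lemma 1, adapted line counting range: there is an integer
`λ ∈ [2-2p, 2p-2]` with
`(1 - q3/q2)·α·p + λ·p²/q2 ≤ c2 - (q3/q2)·c1 < (1 - q3/q2)·β·p + λ·p²/q2` over `ℚ`. -/
theorem alc_lemma_one (p q2 q3 α β j1 j2 j3 k1 k2 k3 c1 c2 : ℤ)
    (hp : Prime p)
    (hq3 : 1 ≤ q3) (hq32 : q3 < q2) (hq2 : q2 ≤ p - 1)
    (hα0 : 0 ≤ α) (hα : α ≤ p - 1)
    (hβ1 : 1 ≤ β) (hβ : β ≤ p) (hαβ : α < β)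
    (hj1 : 0 ≤ j1) (hj1' : j1 ≤ p - 1)
    (hj2 : 0 ≤ j2) (hj2' : j2 ≤ p - 1)
    (hj3 : 0 ≤ j3) (hj3' : j3 ≤ p - 1)
    (hk1 : 0 ≤ k1) (hk1' : k1 ≤ p - 1)
    (hk2 : 0 ≤ k2) (hk2' : k2 ≤ p - 1)
    (hk3 : 0 ≤ k3) (hk3' : k3 ≤ p - 1)
    (hk : k1 = k2)
    (hj3α : α ≤ j3) (hj3β : j3 ≤ β - 1)
    (hdvd2 : p ∣ (k3 - k2) - q2 * (j2 - j3))
    (hdvd3 : p ∣ (k3 - k2) - q3 * (j1 - j3))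
    (hc1 : c1 = j1 * p + k1) (hc2 : c2 = j2 * p + k2) :
    ∃ lam : ℤ, 2 - 2 * p ≤ lam ∧ lam ≤ 2 * p - 2 ∧
      (1 - (q3 : ℚ) / q2) * α * p + (lam : ℚ) * p ^ 2 / q2 ≤ (c2 : ℚ) - (q3 : ℚ) / q2 * c1 ∧
      (c2 : ℚ) - (q3 : ℚ) / q2 * c1 < (1 - (q3 : ℚ) / q2) * β * p + (lam : ℚ) * p ^ 2 / q2 := by
  obtain ⟨m2, hm2⟩ := hdvd2
  obtain ⟨m3, hm3⟩ := hdvd3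
  have hp2 : 2 ≤ p := by linarith
  have hppos : (0:ℤ) < p := by linarith
  have hq2pos : (0:ℤ) < q2 := by linarith
  have hub2 : q2 * (j3 - j2) ≤ (p-1) * (p-1) := by
    nlinarith [mul_nonneg (show (0:ℤ) ≤ q2 by linarith) (show (0:ℤ) ≤ p-1-(j3-j2) by linarith),
      mul_nonneg (show (0:ℤ) ≤ p-1-q2 by linarith) (show (0:ℤ) ≤ p-1 by linarith)]
  have hlb2 : -((p-1) * (p-1)) ≤ q2 * (j3 - j2) := by
    nlinarith [mul_nonneg (show (0:ℤ) ≤ q2 by linarith) (show (0:ℤ) ≤ (j3-j2)+(p-1) by linarith),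
      mul_nonneg (show (0:ℤ) ≤ p-1-q2 by linarith) (show (0:ℤ) ≤ p-1 by linarith)]
  have hub3 : q3 * (j3 - j1) ≤ (p-1) * (p-1) := by
    nlinarith [mul_nonneg (show (0:ℤ) ≤ q3 by linarith) (show (0:ℤ) ≤ p-1-(j3-j1) by linarith),
      mul_nonneg (show (0:ℤ) ≤ p-1-q3 by linarith) (show (0:ℤ) ≤ p-1 by linarith)]
  have hlb3 : -((p-1) * (p-1)) ≤ q3 * (j3 - j1) := by
    nlinarith [mul_nonneg (show (0:ℤ) ≤ q3 by linarith) (show (0:ℤ) ≤ (j3-j1)+(p-1) by linarith),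
      mul_nonneg (show (0:ℤ) ≤ p-1-q3 by linarith) (show (0:ℤ) ≤ p-1 by linarith)]
  have hm2u : m2 ≤ p - 1 := by
    have h : p * m2 ≤ p * (p - 1) := by linarith
    exact le_of_mul_le_mul_left h hppos
  have hm2l : -(p - 1) ≤ m2 := by
    have h : p * (-(p-1)) ≤ p * m2 := by linarith
    exact le_of_mul_le_mul_left h hppos
  have hm3u : m3 ≤ p - 1 := by
    have h : p * m3 ≤ p * (p - 1) := by linarith
    exact le_of_mul_le_mul_left h hppos
  have hm3l : -(p - 1) ≤ m3 := by
    have h : p * (-(p-1)) ≤ p * m3 := by linarith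
    exact le_of_mul_le_mul_left h hppos
  have key : q2 * c2 - q3 * c1 = (q2 - q3) * (j3 * p + k2) + (m3 - m2) * p ^ 2 := by
    subst hc1 hc2 hk
    linear_combination p * hm3 - p * hm2
  have h1 : α * p ≤ j3 * p + k2 := by
    have := mul_le_mul_of_nonneg_right hj3α hppos.le
    linarith
  have h1' : j3 * p + k2 ≤ β * p - 1 := by
    have := mul_le_mul_of_nonneg_right hj3β hppos.le
    linarith
  have hLZ : (q2 - q3) * α * p + (m3 - m2) * p ^ 2 ≤ q2 * c2 - q3 * c1 := by
    rw [key]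
    have := mul_le_mul_of_nonneg_left h1 (by linarith : (0:ℤ) ≤ q2 - q3)
    linarith
  have hRZ : q2 * c2 - q3 * c1 < (q2 - q3) * β * p + (m3 - m2) * p ^ 2 := by
    rw [key]
    have := mul_le_mul_of_nonneg_left h1' (by linarith : (0:ℤ) ≤ q2 - q3)
    linarith
  have hq2Q : (0:ℚ) < (q2:ℚ) := by exact_mod_cast hq2pos
  have hq2ne : (q2:ℚ) ≠ 0 := ne_of_gt hq2Q
  have e1 : (1 - (q3:ℚ)/q2) * α * p + ((m3 - m2 : ℤ) : ℚ) * p ^ 2 / q2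
      = (((q2 - q3) * α * p + (m3 - m2) * p ^ 2 : ℤ) : ℚ) / q2 := by
    rw [eq_div_iff hq2ne]; push_cast; field_simp; try ring
  have e1' : (1 - (q3:ℚ)/q2) * β * p + ((m3 - m2 : ℤ) : ℚ) * p ^ 2 / q2
      = (((q2 - q3) * β * p + (m3 - m2) * p ^ 2 : ℤ) : ℚ) / q2 := by
    rw [eq_div_iff hq2ne]; push_cast; field_simp; try ring
  have e2 : (c2:ℚ) - (q3:ℚ)/q2 * c1 = ((q2 * c2 - q3 * c1 : ℤ) : ℚ) / q2 := by
    rw [eq_div_iff hq2ne]; push_cast; field_simp; try ring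
  refine ⟨m3 - m2, by linarith, by linarith, ?_, ?_⟩
  · rw [e2, e1]
    exact (div_le_div_iff_of_pos_right hq2Q).mpr (by exact_mod_cast hLZ)
  · rw [e2, e1']
    exact (div_lt_div_iff_of_pos_right hq2Q).mpr (by exact_mod_cast hRZ)
end

section
/- Let p be a prime and let α, β, j1, j2, j3, k1, k2, k3 be integers with 0 ≤ α ≤ p−1, 1 ≤ β ≤ p, α < β, all of j1, j2, j3, k1, k2, k3 in {0,...,p−1}, k1 = k2, and α ≤ j3 ≤ β−1. Suppose p divides (k3 − k2) − 2·(j2 − j3) and p divides (k3 − k2) − (j1 − j3). Set c1 = j1·p + k1 and c2 = j2·p + k2, and assume c2 > c1. Then either α·p/2 ≤ c2 − c1/2 < β·p/2 or (p² + α·p)/2 ≤ c2 − c1/2 < (p² + β·p)/2, as rational numbers. -/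
/-- the original line-counting bounds (5a) of the column weight-3 case:
either `α·p/2 ≤ c2 - c1/2 < β·p/2` or `(p² + α·p)/2 ≤ c2 - c1/2 < (p² + β·p)/2`. -/
theorem line_counting_ineq_5a (p α β j1 j2 j3 k1 k2 k3 c1 c2 : ℤ)
    (hp : Prime p)
    (hα0 : 0 ≤ α) (hα : α ≤ p - 1)
    (hβ1 : 1 ≤ β) (hβ : β ≤ p) (hαβ : α < β)
    (hj1 : 0 ≤ j1) (hj1' : j1 ≤ p - 1)
    (hj2 : 0 ≤ j2) (hj2' : j2 ≤ p - 1)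
    (hj3 : 0 ≤ j3) (hj3' : j3 ≤ p - 1)
    (hk1 : 0 ≤ k1) (hk1' : k1 ≤ p - 1)
    (hk2 : 0 ≤ k2) (hk2' : k2 ≤ p - 1)
    (hk3 : 0 ≤ k3) (hk3' : k3 ≤ p - 1)
    (hk : k1 = k2)
    (hj3α : α ≤ j3) (hj3β : j3 ≤ β - 1)
    (hdvd2 : p ∣ (k3 - k2) - 2 * (j2 - j3))
    (hdvd1 : p ∣ (k3 - k2) - (j1 - j3))
    (hc1 : c1 = j1 * p + k1) (hc2 : c2 = j2 * p + k2)
    (hcc : c1 < c2) :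
    ((α : ℚ) * p / 2 ≤ (c2 : ℚ) - (c1 : ℚ) / 2 ∧ (c2 : ℚ) - (c1 : ℚ) / 2 < (β : ℚ) * p / 2) ∨
    (((p : ℚ) ^ 2 + (α : ℚ) * p) / 2 ≤ (c2 : ℚ) - (c1 : ℚ) / 2 ∧
      (c2 : ℚ) - (c1 : ℚ) / 2 < ((p : ℚ) ^ 2 + (β : ℚ) * p) / 2) := by
  have hp0 : (0 : ℤ) < p := by linarith
  subst hk hc1 hc2
  have hj12 : j1 < j2 := by
    have h : j1 * p < j2 * p := by linarith
    exact lt_of_mul_lt_mul_right h hp0.le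
  obtain ⟨a, ha⟩ := hdvd1
  obtain ⟨b, hb⟩ := hdvd2
  have ht : 2 * j2 - j1 - j3 = p * (a - b) := by
    have : p * (a - b) = p * a - p * b := by ring
    linarith
  set t := a - b with htdef
  have h1 : p * (-1) < p * t := by nlinarith
  have h2 : p * t < p * 2 := by nlinarith
  have ht1 : -1 < t := (mul_lt_mul_iff_right₀ hp0).mp h1
  have ht2 : t < 2 := (mul_lt_mul_iff_right₀ hp0).mp h2
  have hpk : α * p ≤ j3 * p ∧ j3 * p + k1 < β * p := by
    constructor
    · nlinarith [mul_le_mul_of_nonneg_right hj3α hp0.le]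
    · nlinarith [mul_le_mul_of_nonneg_right hj3β hp0.le]
  obtain ⟨hL, hR⟩ := hpk
  interval_cases t
  · left
    have key : 2 * j2 - j1 = j3 := by linarith [ht]
    have hkey : 2 * (j2 * p) - j1 * p = j3 * p := by linear_combination p * key
    constructor
    · have h : α * p ≤ 2 * (j2 * p + k1) - (j1 * p + k1) := by linarith
      have h' : (α : ℚ) * p ≤ 2 * ((j2 : ℚ) * p + k1) - ((j1 : ℚ) * p + k1) := by
        exact_mod_cast h
      push_cast
      linarith
    · have h : 2 * (j2 * p + k1) - (j1 * p + k1) < β * p := by linarith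
      have h' : 2 * ((j2 : ℚ) * p + k1) - ((j1 : ℚ) * p + k1) < (β : ℚ) * p := by
        exact_mod_cast h
      push_cast
      linarith
  · right
    have key : 2 * j2 - j1 = j3 + p := by linarith [ht]
    have hkey : 2 * (j2 * p) - j1 * p = j3 * p + p ^ 2 := by linear_combination p * key
    constructor
    · have h : p ^ 2 + α * p ≤ 2 * (j2 * p + k1) - (j1 * p + k1) := by linarith
      have h' : (p : ℚ) ^ 2 + (α : ℚ) * p ≤ 2 * ((j2 : ℚ) * p + k1) - ((j1 : ℚ) * p + k1) := by
        exact_mod_cast h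
      push_cast
      linarith
    · have h : 2 * (j2 * p + k1) - (j1 * p + k1) < p ^ 2 + β * p := by linarith
      have h' : 2 * ((j2 : ℚ) * p + k1) - ((j1 : ℚ) * p + k1) < (p : ℚ) ^ 2 + (β : ℚ) * p := by
        exact_mod_cast h
      push_cast
      linarith
end

section
/- Let p be a prime and let α, β, j1, j2, j3, k1, k2, k3 be integers with 0 ≤ α ≤ p−1, 1 ≤ β ≤ p, α < β, all of j1, j2, j3, k1, k2, k3 in {0,...,p−1}, k1 = k2, and α ≤ j3 ≤ β−1. Suppose p divides (k3 − k2) − (j2 − j3) and p divides (k3 − k2) − 2·(j1 − j3). Set c1 = j1·p + k1 and c2 = j2·p + k2, and assume c2 > c1. Then either −β·p < c2 − 2·c1 ≤ −α·p or p² − β·p < c2 − 2·c1 ≤ p² − α·p. -/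
/-- the line-counting bounds (5b) of the column weight-3 case:
either `-β·p < c2 - 2·c1 ≤ -α·p` or `p² - β·p < c2 - 2·c1 ≤ p² - α·p`. -/
theorem line_counting_ineq_5b (p α β j1 j2 j3 k1 k2 k3 c1 c2 : ℤ)
    (hp : Prime p)
    (hα0 : 0 ≤ α) (hα : α ≤ p - 1)
    (hβ1 : 1 ≤ β) (hβ : β ≤ p) (hαβ : α < β)
    (hj1 : 0 ≤ j1) (hj1' : j1 ≤ p - 1)
    (hj2 : 0 ≤ j2) (hj2' : j2 ≤ p - 1)
    (hj3 : 0 ≤ j3) (hj3' : j3 ≤ p - 1)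
    (hk1 : 0 ≤ k1) (hk1' : k1 ≤ p - 1)
    (hk2 : 0 ≤ k2) (hk2' : k2 ≤ p - 1)
    (hk3 : 0 ≤ k3) (hk3' : k3 ≤ p - 1)
    (hk : k1 = k2)
    (hj3α : α ≤ j3) (hj3β : j3 ≤ β - 1)
    (hdvd1 : p ∣ (k3 - k2) - (j2 - j3))
    (hdvd2 : p ∣ (k3 - k2) - 2 * (j1 - j3))
    (hc1 : c1 = j1 * p + k1) (hc2 : c2 = j2 * p + k2)
    (hcc : c1 < c2) :
    (-(β * p) < c2 - 2 * c1 ∧ c2 - 2 * c1 ≤ -(α * p)) ∨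
    (p ^ 2 - β * p < c2 - 2 * c1 ∧ c2 - 2 * c1 ≤ p ^ 2 - α * p) := by
  have hp2 : 2 ≤ p := by
    have h1 : p ≠ 1 := hp.ne_one
    omega
  have hd : p ∣ (j2 + j3 - 2 * j1) := by
    have h1 := dvd_sub hdvd2 hdvd1
    have h : (k3 - k2) - 2 * (j1 - j3) - ((k3 - k2) - (j2 - j3)) = j2 + j3 - 2 * j1 := by
      ring
    rwa [h] at h1
  obtain ⟨m, hm⟩ := hd
  have hmb : m = -1 ∨ m = 0 ∨ m = 1 := by
    rcases lt_trichotomy m 0 with h | h | h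
    · left
      by_contra hne
      have h2 : m ≤ -2 := by omega
      nlinarith
    · right; left; exact h
    · right; right
      by_contra hne
      have h2 : 2 ≤ m := by omega
      nlinarith
  have hc : c2 - 2 * c1 = m * p ^ 2 - j3 * p - k1 := by
    subst hc1 hc2 hk
    linear_combination p * hm
  rcases hmb with h | h | h
  · exfalso
    rw [h] at hc
    nlinarith [mul_nonneg hj3 (by linarith : (0:ℤ) ≤ p)]
  · left
    rw [h] at hc
    constructor
    · nlinarith
    · nlinarith [mul_nonneg hj3 (by linarith : (0:ℤ) ≤ p)]
  · right
    rw [h] at hc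
    constructor
    · nlinarith
    · nlinarith
end

section
/- (A 6-cycle spans three distinct row groups and three distinct column groups.) Let p be a prime and work in ZMod p. Suppose q1, q2, q3, s1, s2, s3, j1, j2, j3, k1, k2, k3 ∈ ZMod p satisfy s1 = q1·j1 + k1, s1 = q1·j2 + k2, s2 = q2·j2 + k2, s2 = q2·j3 + k3, s3 = q3·j3 + k3, and s3 = q3·j1 + k1, and suppose the three row pairs (q1,s1), (q2,s2), (q3,s3) are pairwise distinct and the three column pairs (j1,k1), (j2,k2), (j3,k3) are pairwise distinct. Then q1, q2, q3 are pairwise distinct and j1, j2, j3 are pairwise distinct. -/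
/-- a 6-cycle spans three distinct row groups and three distinct
column groups. -/
theorem six_cycle_distinct_groups (p : ℕ) (hp : p.Prime)
    (q1 q2 q3 s1 s2 s3 j1 j2 j3 k1 k2 k3 : ZMod p)
    (h11 : s1 = q1 * j1 + k1) (h12 : s1 = q1 * j2 + k2)
    (h22 : s2 = q2 * j2 + k2) (h23 : s2 = q2 * j3 + k3)
    (h33 : s3 = q3 * j3 + k3) (h31 : s3 = q3 * j1 + k1)
    (hr12 : (q1, s1) ≠ (q2, s2)) (hr13 : (q1, s1) ≠ (q3, s3)) (hr23 : (q2, s2) ≠ (q3, s3))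
    (hc12 : (j1, k1) ≠ (j2, k2)) (hc13 : (j1, k1) ≠ (j3, k3)) (hc23 : (j2, k2) ≠ (j3, k3)) :
    (q1 ≠ q2 ∧ q1 ≠ q3 ∧ q2 ≠ q3) ∧ (j1 ≠ j2 ∧ j1 ≠ j3 ∧ j2 ≠ j3) := by
  refine ⟨⟨?_, ?_, ?_⟩, ?_, ?_, ?_⟩
  · intro h; exact hr12 (by subst h; simp [Prod.ext_iff, h12, h22])
  · intro h; exact hr13 (by subst h; simp [Prod.ext_iff, h11, h31])
  · intro h; exact hr23 (by subst h; simp [Prod.ext_iff, h23, h33])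
  · intro h; subst h
    exact hc12 (by simpa [Prod.ext_iff] using by linear_combination h12 - h11)
  · intro h; subst h
    exact hc13 (by simpa [Prod.ext_iff] using by linear_combination h33 - h31)
  · intro h; subst h
    exact hc23 (by simpa [Prod.ext_iff] using by linear_combination h23 - h22)
end
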